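/- arXiv:2005.02687 — 3 statements merged into one kernel-verified Lean document; each statement's English description precedes it below -/
import Mathlib

section
/- The function t ↦ (t² + β)^{p/2} on ℝ is strictly convex for every β > 0 and 1 ≤ p ≤ 2, and consequently Ψ_p(x) = (1/p) ∑_i (x_i² + β)^{p/2} is strictly convex on ℝⁿ. -/
/-!
With `u = t² + β`, the second derivative of `u ^ q` is `2q u^(q-2) ((2q - 1) t² + β)`, which is
positive as soon as `β > 0` and `q ≥ 1/2`; for `q = p/2` this is `p ≥ 1`. Two distinct points of
`ℝⁿ` differ in some coordinate, where the scalar strict inequality makes the sum inequality strict.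
-/

open Set

section SqAddRpow

variable {β : ℝ}

theorem hasDerivAt_sq_add_rpow (hβ : 0 < β) (q t : ℝ) :
    HasDerivAt (fun t : ℝ => (t ^ 2 + β) ^ q) (2 * q * t * (t ^ 2 + β) ^ (q - 1)) t := by
  have h := ((hasDerivAt_pow 2 t).add_const β).rpow_const (p := q) (Or.inl (by positivity))
  convert h using 1
  push_cast
  ring

theorem deriv2_sq_add_rpow (hβ : 0 < β) (q t : ℝ) :
    deriv^[2] (fun t : ℝ => (t ^ 2 + β) ^ q) t
      = 2 * q * (t ^ 2 + β) ^ (q - 2) * ((2 * q - 1) * t ^ 2 + β) := by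
  have hderiv : deriv (fun t : ℝ => (t ^ 2 + β) ^ q) = fun t => 2 * q * t * (t ^ 2 + β) ^ (q - 1) :=
    funext fun t => (hasDerivAt_sq_add_rpow hβ q t).deriv
  have h : HasDerivAt (fun t : ℝ => 2 * q * t * (t ^ 2 + β) ^ (q - 1))
      (2 * q * 1 * (t ^ 2 + β) ^ (q - 1) + 2 * q * t * (2 * (q - 1) * t * (t ^ 2 + β) ^ (q - 1 - 1)))
      t :=
    ((hasDerivAt_id t).const_mul (2 * q)).mul (hasDerivAt_sq_add_rpow hβ (q - 1) t)
  rw [Function.iterate_succ_apply, Function.iterate_one, hderiv, h.deriv]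
  have hu : (t ^ 2 + β) ^ (q - 1) = (t ^ 2 + β) ^ (q - 2) * (t ^ 2 + β) := by
    rw [← Real.rpow_add_one (by positivity)]; ring_nf
  rw [hu, show q - 1 - 1 = q - 2 by ring]
  ring

theorem strictConvexOn_sq_add_rpow (hβ : 0 < β) {q : ℝ} (hq : 1 / 2 ≤ q) :
    StrictConvexOn ℝ univ fun t : ℝ => (t ^ 2 + β) ^ q := by
  refine strictConvexOn_univ_of_deriv2_pos
    (continuous_iff_continuousAt.2 fun t => (hasDerivAt_sq_add_rpow hβ q t).continuousAt)
    fun t => ?_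
  rw [deriv2_sq_add_rpow hβ]
  have h2q : 0 ≤ 2 * q - 1 := by linarith
  have : 0 < (2 * q - 1) * t ^ 2 + β := by positivity
  positivity

end SqAddRpow

variable {𝕜 E : Type*} [Field 𝕜] [LinearOrder 𝕜] [IsStrictOrderedRing 𝕜]
  [AddCommGroup E] [Module 𝕜 E] {s : Set E} {f : E → 𝕜}

theorem StrictConvexOn.const_mul {c : 𝕜} (hc : 0 < c) (hf : StrictConvexOn 𝕜 s f) :
    StrictConvexOn 𝕜 s fun x => c * f x := by
  refine ⟨hf.1, fun x hx y hy hxy a b ha hb hab => ?_⟩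
  calc c * f (a • x + b • y) < c * (a • f x + b • f y) :=
        mul_lt_mul_of_pos_left (hf.2 hx hy hxy ha hb hab) hc
    _ = a • (c * f x) + b • (c * f y) := by simp only [smul_eq_mul]; ring

theorem StrictConvexOn.sum_comp_eval {ι : Type*} [Fintype ι] (hf : StrictConvexOn 𝕜 s f) :
    StrictConvexOn 𝕜 (univ.pi fun _ : ι => s) fun x => ∑ i, f (x i) := by
  refine ⟨convex_pi fun _ _ => hf.1, fun x hx y hy hxy a b ha hb hab => ?_⟩
  obtain ⟨j, hj⟩ := Function.ne_iff.mp hxy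
  calc ∑ i, f ((a • x + b • y) i) < ∑ i, (a • f (x i) + b • f (y i)) :=
        Finset.sum_lt_sum
          (fun i _ => hf.convexOn.2 (hx i trivial) (hy i trivial) ha.le hb.le hab)
          ⟨j, Finset.mem_univ j, hf.2 (hx j trivial) (hy j trivial) hj ha hb hab⟩
    _ = a • ∑ i, f (x i) + b • ∑ i, f (y i) := by
        rw [Finset.sum_add_distrib, Finset.smul_sum, Finset.smul_sum]

theorem smooth_approx_strictConvex_general (n : ℕ) (β p : ℝ) (hβ : 0 < β)
    (hp1 : 1 ≤ p) :
    StrictConvexOn ℝ Set.univ (fun t : ℝ => (t ^ 2 + β) ^ (p / 2)) ∧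
    StrictConvexOn ℝ Set.univ
      (fun x : Fin n → ℝ => (1 / p) * ∑ i, ((x i ^ 2 + β) ^ (p / 2))) := by
  have h := strictConvexOn_sq_add_rpow hβ (q := p / 2) (by linarith)
  refine ⟨h, ?_⟩
  simpa only [pi_univ] using (h.sum_comp_eval (ι := Fin n)).const_mul (by positivity : 0 < 1 / p)

/-- For β > 0 and 1 ≤ p ≤ 2, the scalar function t ↦ (t² + β)^{p/2} is strictly convex
on ℝ, and consequently Ψ_p(x) = (1/p) ∑ᵢ (xᵢ² + β)^{p/2} is strictly convex on ℝⁿ. -/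
theorem smooth_approx_strictConvex (n : ℕ) (β p : ℝ) (hβ : 0 < β)
    (hp1 : 1 ≤ p) (hp2 : p ≤ 2) :
    StrictConvexOn ℝ Set.univ (fun t : ℝ => (t ^ 2 + β) ^ (p / 2)) ∧
    StrictConvexOn ℝ Set.univ
      (fun x : Fin n → ℝ => (1 / p) * ∑ i, ((x i ^ 2 + β) ^ (p / 2))) :=
  smooth_approx_strictConvex_general n β p hβ hp1
end

section
/- Let V_k ∈ ℝ^{n×k} have orthonormal columns, assume the Generalized-Krylov condition diag(V_k,1) F^{(k)}(ȳ,λ) = F(V_k ȳ, λ) holds, and suppose J^{(k)}(ȳ,λ) is nonsingular. Let (Δy, Δλ) solve J^{(k)}(ȳ,λ)(Δy,Δλ)ᵀ = −F^{(k)}(ȳ,λ), and set Δ = (V_kΔy, Δλ) ∈ ℝ^{n+1}. Then the directional derivative of the merit function f(x,λ) = (1/2)‖F(x,λ)‖² at (V_kȳ, λ) along Δ equals −‖F(V_kȳ,λ)‖², so Δ is a descent direction whenever F(V_kȳ,λ) ≠ 0. -/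
/-! The merit function `½ ∑ Fᵢ²` has directional derivative `⟨F, F' Δ⟩`, i.e. its gradient is
`F'ᵀ F`. If `P Pᵀ F = F`, the projected system `(Pᵀ F' P) Δy = -Pᵀ F` therefore gives
`⟨F, F' (P Δy)⟩ = ⟨Pᵀ F, (Pᵀ F' P) Δy⟩ = -‖Pᵀ F‖² = -‖F‖²`. -/

open Matrix

/-- diag(V,1): the (n+1)×(k+1) block-diagonal matrix with blocks V and the scalar 1. -/
noncomputable def padMat {n k : ℕ} (V : Matrix (Fin n) (Fin k) ℝ) :
    Matrix (Fin n ⊕ Unit) (Fin k ⊕ Unit) ℝ :=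
  Matrix.fromBlocks V 0 0 (1 : Matrix Unit Unit ℝ)

theorem HasFDerivAt.fderiv_half_sum_sq_apply {E ι : Type*} [NormedAddCommGroup E]
    [NormedSpace ℝ E] [Fintype ι] {F : E → ι → ℝ} {L : E →L[ℝ] ι → ℝ} {u : E}
    (hF : HasFDerivAt F L u) (Δ : E) :
    fderiv ℝ (fun w => (1 / 2) * ∑ i, F w i ^ 2) u Δ = F u ⬝ᵥ L Δ := by
  have hcoord (i : ι) : HasFDerivAt (fun w => F w i) ((ContinuousLinearMap.proj i).comp L) u :=
    (ContinuousLinearMap.proj (R := ℝ) (φ := fun _ : ι => ℝ) i).hasFDerivAt.comp u hF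
  have hmerit :=
    (HasFDerivAt.fun_sum (u := Finset.univ) fun i _ => (hcoord i).pow 2).const_mul (1 / 2 : ℝ)
  rw [hmerit.fderiv]
  simp only [_root_.smul_apply, FunLike.coe_sum, Finset.sum_apply, ContinuousLinearMap.comp_apply,
    ContinuousLinearMap.proj_apply, dotProduct, nsmul_eq_mul, smul_eq_mul, Finset.mul_sum]
  exact Finset.sum_congr rfl fun i _ => by ring

theorem dotProduct_mulVec_eq_neg_of_projected_system {m k R : Type*} [Fintype m] [Fintype k]
    [CommRing R] {P : Matrix m k R} {J : Matrix m m R} {g : m → R} {Δy : k → R}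
    (hg : P *ᵥ (Pᵀ *ᵥ g) = g) (hΔy : (Pᵀ * J * P) *ᵥ Δy = -(Pᵀ *ᵥ g)) :
    g ⬝ᵥ J *ᵥ (P *ᵥ Δy) = -(g ⬝ᵥ g) := by
  have adjoint (x : k → R) (z : m → R) : P *ᵥ x ⬝ᵥ z = x ⬝ᵥ Pᵀ *ᵥ z := by
    rw [dotProduct_comm, dotProduct_mulVec, dotProduct_comm, mulVec_transpose]
  calc g ⬝ᵥ J *ᵥ (P *ᵥ Δy) = Pᵀ *ᵥ g ⬝ᵥ (Pᵀ * J * P) *ᵥ Δy := by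
        conv_lhs => rw [← hg]
        rw [adjoint, mulVec_mulVec, mulVec_mulVec, Matrix.mul_assoc]
    _ = -(P *ᵥ (Pᵀ *ᵥ g) ⬝ᵥ g) := by rw [hΔy, dotProduct_neg, adjoint]
    _ = -(g ⬝ᵥ g) := by rw [hg]

theorem projected_newton_descent_general (n k : ℕ)
    (F : (Fin n ⊕ Unit → ℝ) → (Fin n ⊕ Unit → ℝ))
    (J : (Fin n ⊕ Unit → ℝ) → Matrix (Fin n ⊕ Unit) (Fin n ⊕ Unit) ℝ)
    (hJ : ∀ u, HasFDerivAt F (LinearMap.toContinuousLinearMap ((J u).mulVecLin)) u)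
    (V : Matrix (Fin n) (Fin k) ℝ)
    (u : Fin n ⊕ Unit → ℝ)
    (hKrylov : (padMat V).mulVec ((padMat V)ᵀ.mulVec (F u)) = F u)
    (Jk : Matrix (Fin k ⊕ Unit) (Fin k ⊕ Unit) ℝ)
    (hJk : Jk = (padMat V)ᵀ * J u * padMat V)
    (Δy : Fin k ⊕ Unit → ℝ)
    (hΔy : Jk.mulVec Δy = -((padMat V)ᵀ.mulVec (F u)))
    (Δ : Fin n ⊕ Unit → ℝ) (hΔ : Δ = (padMat V).mulVec Δy) :
    fderiv ℝ (fun w => (1 / 2) * ∑ i, (F w i) ^ 2) u Δ = -∑ i, (F u i) ^ 2 ∧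
    (F u ≠ 0 → fderiv ℝ (fun w => (1 / 2) * ∑ i, (F w i) ^ 2) u Δ < 0) := by
  subst hJk hΔ
  have hslope : fderiv ℝ (fun w => (1 / 2) * ∑ i, (F w i) ^ 2) u ((padMat V) *ᵥ Δy)
      = -(F u ⬝ᵥ F u) := by
    rw [(hJ u).fderiv_half_sum_sq_apply, LinearMap.coe_toContinuousLinearMap', mulVecLin_apply,
      dotProduct_mulVec_eq_neg_of_projected_system hKrylov hΔy]
  have hsq : F u ⬝ᵥ F u = ∑ i, F u i ^ 2 := by simp only [dotProduct, sq]
  refine ⟨by rw [hslope, hsq], fun hne => ?_⟩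
  rw [hslope, neg_lt_zero]
  simpa using dotProduct_self_star_pos_iff.mpr hne

/-- The projected Newton step Δ = (V_kΔy, Δλ) is a descent direction for the merit
function f = ½‖F‖²: the directional derivative of f at u = (V_kȳ, λ) along Δ equals
−‖F(u)‖², hence is negative whenever F(u) ≠ 0. -/
theorem projected_newton_descent (m n k : ℕ) (A : Matrix (Fin m) (Fin n) ℝ)
    (b : Fin m → ℝ) (σ : ℝ)
    (Ψ : (Fin n → ℝ) → ℝ) (gradΨ : (Fin n → ℝ) → Fin n → ℝ)
    (hgrad : ∀ x i, gradΨ x i = fderiv ℝ Ψ x (Pi.single i 1))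
    (F : (Fin n ⊕ Unit → ℝ) → (Fin n ⊕ Unit → ℝ))
    (hF : ∀ u, F u = Sum.elim
        (fun i => u (Sum.inr ()) *
            Aᵀ.mulVec (A.mulVec (fun j => u (Sum.inl j)) - b) i +
          gradΨ (fun j => u (Sum.inl j)) i)
        (fun _ => (1 / 2) * ∑ j, (A.mulVec (fun j' => u (Sum.inl j')) j - b j) ^ 2 -
          σ ^ 2 / 2))
    (J : (Fin n ⊕ Unit → ℝ) → Matrix (Fin n ⊕ Unit) (Fin n ⊕ Unit) ℝ)
    (hJ : ∀ u, HasFDerivAt F (LinearMap.toContinuousLinearMap ((J u).mulVecLin)) u)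
    (V : Matrix (Fin n) (Fin k) ℝ) (hV : Vᵀ * V = 1)
    (ybar : Fin k → ℝ) (lam : ℝ) (u : Fin n ⊕ Unit → ℝ)
    (hu : u = (padMat V).mulVec (Sum.elim ybar fun _ => lam))
    (hKrylov : (padMat V).mulVec ((padMat V)ᵀ.mulVec (F u)) = F u)
    (Jk : Matrix (Fin k ⊕ Unit) (Fin k ⊕ Unit) ℝ)
    (hJk : Jk = (padMat V)ᵀ * J u * padMat V)
    (hns : IsUnit Jk.det)
    (Δy : Fin k ⊕ Unit → ℝ)
    (hΔy : Jk.mulVec Δy = -((padMat V)ᵀ.mulVec (F u)))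
    (Δ : Fin n ⊕ Unit → ℝ) (hΔ : Δ = (padMat V).mulVec Δy) :
    fderiv ℝ (fun w => (1 / 2) * ∑ i, (F w i) ^ 2) u Δ = -∑ i, (F u i) ^ 2 ∧
    (F u ≠ 0 → fderiv ℝ (fun w => (1 / 2) * ∑ i, (F w i) ^ 2) u Δ < 0) :=
  projected_newton_descent_general n k F J hJ V u hKrylov Jk hJk Δy hΔy Δ hΔ
end

section
/- Let ȳ ∈ ℝᵏ satisfy ‖AV_kȳ − b‖ ≥ σ, and let (Δy, Δλ) satisfy the last row of the projected Newton system, i.e., (AV_kȳ − b)ᵀAV_kΔy = σ²/2 − (1/2)‖AV_kȳ − b‖². Then for every step length 0 < γ ≤ 1, the updated point y = ȳ + γΔy satisfies ‖AV_k y − b‖² ≥ σ² + γ²‖AV_kΔy‖², and in particular ‖AV_k y − b‖ ≥ σ. -/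
open Matrix

open scoped RealInnerProductSpace

section InnerProductSpace

variable {E : Type*} [NormedAddCommGroup E] [InnerProductSpace ℝ E] {r d : E} {σ γ : ℝ}

theorem norm_add_smul_sq_of_inner_eq (h : ⟪r, d⟫ = σ ^ 2 / 2 - ‖r‖ ^ 2 / 2) (γ : ℝ) :
    ‖r + γ • d‖ ^ 2 = (1 - γ) * ‖r‖ ^ 2 + γ * σ ^ 2 + γ ^ 2 * ‖d‖ ^ 2 := by
  rw [norm_add_sq_real, inner_smul_right, norm_smul, mul_pow, Real.norm_eq_abs, sq_abs, h]
  ring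

theorem sq_add_sq_mul_norm_sq_le_norm_add_smul_sq (hr : σ ^ 2 ≤ ‖r‖ ^ 2)
    (h : ⟪r, d⟫ = σ ^ 2 / 2 - ‖r‖ ^ 2 / 2) (hγ : γ ≤ 1) :
    σ ^ 2 + γ ^ 2 * ‖d‖ ^ 2 ≤ ‖r + γ • d‖ ^ 2 := by
  rw [norm_add_smul_sq_of_inner_eq h]
  nlinarith [mul_nonneg (sub_nonneg.2 hγ) (sub_nonneg.2 hr)]

theorem le_norm_add_smul_of_inner_eq (hr : σ ^ 2 ≤ ‖r‖ ^ 2)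
    (h : ⟪r, d⟫ = σ ^ 2 / 2 - ‖r‖ ^ 2 / 2) (hγ : γ ≤ 1) :
    σ ≤ ‖r + γ • d‖ :=
  have hsq : σ ^ 2 ≤ ‖r + γ • d‖ ^ 2 :=
    le_of_add_le_of_nonneg_left (sq_add_sq_mul_norm_sq_le_norm_add_smul_sq hr h hγ)
      (by positivity)
  (le_abs_self σ).trans (abs_le_of_sq_le_sq hsq (norm_nonneg _))

end InnerProductSpace

theorem residual_never_below_discrepancy_general (m n k : ℕ) (A : Matrix (Fin m) (Fin n) ℝ)
    (V : Matrix (Fin n) (Fin k) ℝ) (b : Fin m → ℝ) (σ : ℝ)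
    (ybar Δy : Fin k → ℝ)
    (hres : σ ^ 2 ≤ ∑ i, ((A * V).mulVec ybar i - b i) ^ 2)
    (hlast : ∑ i, ((A * V).mulVec ybar i - b i) * (A * V).mulVec Δy i =
      σ ^ 2 / 2 - (1 / 2) * ∑ i, ((A * V).mulVec ybar i - b i) ^ 2)
    (γ : ℝ) (hγ1 : γ ≤ 1) :
    σ ^ 2 + γ ^ 2 * ∑ i, ((A * V).mulVec Δy i) ^ 2 ≤
      ∑ i, ((A * V).mulVec (ybar + γ • Δy) i - b i) ^ 2 ∧
    σ ≤ Real.sqrt (∑ i, ((A * V).mulVec (ybar + γ • Δy) i - b i) ^ 2) := by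
  let r : EuclideanSpace ℝ (Fin m) := WithLp.toLp 2 ((A * V) *ᵥ ybar - b)
  let d : EuclideanSpace ℝ (Fin m) := WithLp.toLp 2 ((A * V) *ᵥ Δy)
  have hnorm_r : ‖r‖ ^ 2 = ∑ i, ((A * V).mulVec ybar i - b i) ^ 2 :=
    EuclideanSpace.real_norm_sq_eq r
  have hnorm_d : ‖d‖ ^ 2 = ∑ i, ((A * V).mulVec Δy i) ^ 2 := EuclideanSpace.real_norm_sq_eq d
  have hinner : ⟪r, d⟫ = σ ^ 2 / 2 - ‖r‖ ^ 2 / 2 := by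
    rw [EuclideanSpace.inner_toLp_toLp, star_trivial, dotProduct_comm, hnorm_r]
    exact hlast.trans (by ring)
  have hupdate : ‖r + γ • d‖ ^ 2 = ∑ i, ((A * V).mulVec (ybar + γ • Δy) i - b i) ^ 2 := by
    rw [EuclideanSpace.real_norm_sq_eq]
    congr! 2 with i
    simp only [r, d, WithLp.toLp_sub, PiLp.add_apply, PiLp.sub_apply, PiLp.smul_apply,
      smul_eq_mul, mulVec_add, mulVec_smul, Pi.add_apply, Pi.smul_apply]
    ring
  constructor
  · rw [← hnorm_d, ← hupdate]
    exact sq_add_sq_mul_norm_sq_le_norm_add_smul_sq (hnorm_r ▸ hres) hinner hγ1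
  · rw [← hupdate, Real.sqrt_sq (norm_nonneg _)]
    exact le_norm_add_smul_of_inner_eq (hnorm_r ▸ hres) hinner hγ1

/-- If ‖AV_kȳ − b‖ ≥ σ and (Δy, Δλ) satisfies the last row of the projected Newton
system, then for any 0 < γ ≤ 1 the update y = ȳ + γΔy satisfies
‖AV_ky − b‖² ≥ σ² + γ²‖AV_kΔy‖², in particular ‖AV_ky − b‖ ≥ σ. -/
theorem residual_never_below_discrepancy (m n k : ℕ) (A : Matrix (Fin m) (Fin n) ℝ)
    (V : Matrix (Fin n) (Fin k) ℝ) (b : Fin m → ℝ) (σ : ℝ) (hσ : 0 < σ)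
    (ybar Δy : Fin k → ℝ)
    (hres : σ ^ 2 ≤ ∑ i, ((A * V).mulVec ybar i - b i) ^ 2)
    (hlast : ∑ i, ((A * V).mulVec ybar i - b i) * (A * V).mulVec Δy i =
      σ ^ 2 / 2 - (1 / 2) * ∑ i, ((A * V).mulVec ybar i - b i) ^ 2)
    (γ : ℝ) (hγ0 : 0 < γ) (hγ1 : γ ≤ 1) :
    σ ^ 2 + γ ^ 2 * ∑ i, ((A * V).mulVec Δy i) ^ 2 ≤
      ∑ i, ((A * V).mulVec (ybar + γ • Δy) i - b i) ^ 2 ∧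
    σ ≤ Real.sqrt (∑ i, ((A * V).mulVec (ybar + γ • Δy) i - b i) ^ 2) :=
  residual_never_below_discrepancy_general m n k A V b σ ybar Δy hres hlast γ hγ1
end
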